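/- Let (P, ≤, ', 0, 1) be a pseudo-orthomodular poset, M(x,y) = L(U(x,y'), y), and R(x,y) = L(U(L(y,x), x')). Then for all x, y ∈ P: L((M(y',x))') = R(x,y) and L((R(y,x'))') = M(x,y), where for a subset A, A' = { a' : a ∈ A } and L(A') denotes its set of lower bounds. -/

import Mathlib

/-!
An antitone involution `f` is an order isomorphism between `P` and its dual, so it exchanges
lower and upper bounds: `L (f '' A) = f '' U A` and `U (f '' A) = f '' L A`. Both identities then
follow by pushing `f` through the bound operators and using `f '' (f '' A) = A` and `L U L = L`.
-/

open Set

theorem lowerBounds_upperBounds_lowerBounds {P : Type*} [Preorder P] (A : Set P) :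
    lowerBounds (upperBounds (lowerBounds A)) = lowerBounds A :=
  gc_upperBounds_lowerBounds.u_l_u_eq_u (OrderDual.toDual A)

namespace Function.Involutive

theorem image_image {α : Type*} {f : α → α} (hinv : Involutive f) (A : Set α) :
    f '' (f '' A) = A := by
  rw [Set.image_image, funext hinv, Set.image_id']

variable {P : Type*} [Preorder P] {f : P → P}

theorem lowerBounds_image_of_antitone (hinv : Involutive f) (hf : Antitone f) (A : Set P) :
    lowerBounds (f '' A) = f '' upperBounds A := by
  ext w
  constructor
  · intro hw
    refine ⟨f w, fun a ha => ?_, hinv w⟩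
    simpa only [hinv a] using hf (hw (mem_image_of_mem f ha))
  · rintro ⟨v, hv, rfl⟩ _ ⟨a, ha, rfl⟩
    exact hf (hv ha)

theorem upperBounds_image_of_antitone (hinv : Involutive f) (hf : Antitone f) (A : Set P) :
    upperBounds (f '' A) = f '' lowerBounds A := by
  rw [← hinv.image_image (upperBounds (f '' A)), ← hinv.lowerBounds_image_of_antitone hf,
    hinv.image_image]

theorem lowerBounds_image_lowerBounds_image (hinv : Involutive f) (hf : Antitone f) (B : Set P) :
    lowerBounds (f '' lowerBounds (f '' B)) = lowerBounds (upperBounds B) := by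
  rw [hinv.lowerBounds_image_of_antitone hf B, hinv.image_image]

end Function.Involutive

theorem stmt14_general {P : Type*} [PartialOrder P] (f : P → P)
    (hant : ∀ x y : P, x ≤ y → f y ≤ f x)
    (hinv : ∀ x : P, f (f x) = x) :
    ∀ x y : P,
      lowerBounds (f '' lowerBounds (upperBounds {f y, f x} ∪ {x})) =
        lowerBounds (upperBounds (lowerBounds {y, x} ∪ {f x})) ∧
      lowerBounds (f '' lowerBounds (upperBounds (lowerBounds {f x, y} ∪ {f y}))) =
        lowerBounds (upperBounds {x, f y} ∪ {y}) := by
  have hf : Antitone f := fun a b hab => hant a b hab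
  have hinv : Function.Involutive f := hinv
  intro x y
  have hM : upperBounds {f y, f x} ∪ {x} = f '' (lowerBounds {y, x} ∪ {f x}) := by
    rw [image_union, ← hinv.upperBounds_image_of_antitone hf]
    simp only [image_insert_eq, image_singleton, hinv x]
  have hR : lowerBounds {f x, y} ∪ {f y} = f '' (upperBounds {x, f y} ∪ {y}) := by
    rw [image_union, ← hinv.lowerBounds_image_of_antitone hf]
    simp only [image_insert_eq, image_singleton, hinv y]
  refine ⟨?_, ?_⟩
  · rw [hM, hinv.lowerBounds_image_lowerBounds_image hf]
  · rw [hR, hinv.upperBounds_image_of_antitone hf, hinv.lowerBounds_image_lowerBounds_image hf,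
      lowerBounds_upperBounds_lowerBounds]

theorem stmt14 {P : Type*} [PartialOrder P] (f : P → P) (z o : P)
    (h0 : ∀ x, z ≤ x) (h1 : ∀ x, x ≤ o)
    (hc1 : ∀ x : P, lowerBounds {x, f x} = {z})
    (hc2 : ∀ x : P, upperBounds {x, f x} = {o})
    (hant : ∀ x y : P, x ≤ y → f y ≤ f x)
    (hinv : ∀ x : P, f (f x) = x)
    (hpo : ∀ x y : P, lowerBounds (upperBounds (lowerBounds {x, y} ∪ {f y}) ∪ {y}) =
      lowerBounds {x, y}) :
    ∀ x y : P,
      lowerBounds (f '' lowerBounds (upperBounds {f y, f x} ∪ {x})) =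
        lowerBounds (upperBounds (lowerBounds {y, x} ∪ {f x})) ∧
      lowerBounds (f '' lowerBounds (upperBounds (lowerBounds {f x, y} ∪ {f y}))) =
        lowerBounds (upperBounds {x, f y} ∪ {y}) :=
  stmt14_general f hant hinv
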